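/- arXiv:0810.1148 — 9 statements merged into one kernel-verified Lean document; each statement's English description precedes it below -/
import Mathlib

section
/- If τ: Γ → D is a divisor theory of a commutative semigroup Γ (an embedding into a free commutative monoid D such that (i) whenever τ(a) = τ(b)·c₁ for c₁ ∈ D there exists c ∈ Γ with c₁ = τ(c), and (ii) two elements d₁, d₂ ∈ D are equal whenever they divide exactly the same set of elements τ(a), a ∈ Γ), and L is the subgroup of the Grothendieck group of D generated by τ(Γ), then Γ is saturated in L: if l ∈ L satisfies l^m ∈ τ(Γ) for some positive integer m, then l ∈ τ(Γ). -/
/-- saturation of a semigroup in the Grothendieck group of its divisor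
theory.  The free commutative monoid `D` is modelled additively as `P →₀ ℕ` (finitely
supported functions on the set `P` of primes), whose Grothendieck group is `P →₀ ℤ`.
Divisibility in `D` is the pointwise order. -/
theorem divisor_theory_saturated
    (Γ : Type*) [AddCommMonoid Γ]
    (hΓunits : ∀ a b : Γ, a + b = 0 → a = 0)
    (P : Type*) (τ : Γ →+ (P →₀ ℕ))
    (hinj : Function.Injective τ)
    (hcond1 : ∀ (a b : Γ) (c₁ : P →₀ ℕ), τ a = τ b + c₁ → ∃ c : Γ, c₁ = τ c)
    (hcond2 : ∀ d₁ d₂ : P →₀ ℕ,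
      ({a : Γ | d₁ ≤ τ a} = {a : Γ | d₂ ≤ τ a}) → d₁ = d₂)
    (ι : (P →₀ ℕ) →+ (P →₀ ℤ))
    (hι : ∀ (d : P →₀ ℕ) (p : P), ι d p = (d p : ℤ))
    (L : AddSubgroup (P →₀ ℤ))
    (hL : L = AddSubgroup.closure (Set.range fun a : Γ => ι (τ a)))
    (l : P →₀ ℤ) (hl : l ∈ L) (m : ℕ) (hm : 0 < m)
    (hlm : ∃ a : Γ, m • l = ι (τ a)) :
    ∃ a : Γ, l = ι (τ a) := by
  -- Step 1: every element of L is of the form ι(τ x) - ι(τ y)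
  have key : ∃ x y : Γ, l + ι (τ y) = ι (τ x) := by
    subst hL
    refine AddSubgroup.closure_induction ?_ ?_ ?_ ?_ hl
    · rintro _ ⟨a, rfl⟩
      exact ⟨a, 0, by simp⟩
    · exact ⟨0, 0, by simp⟩
    · rintro z w - - ⟨x₁, y₁, h₁⟩ ⟨x₂, y₂, h₂⟩
      refine ⟨x₁ + x₂, y₁ + y₂, ?_⟩
      simp only [map_add]
      rw [show z + w + (ι (τ y₁) + ι (τ y₂)) = (z + ι (τ y₁)) + (w + ι (τ y₂)) by abel,
        h₁, h₂]
    · rintro z - ⟨x₁, y₁, h₁⟩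
      exact ⟨y₁, x₁, by rw [← h₁]; abel⟩
  obtain ⟨x, y, hxy⟩ := key
  obtain ⟨a, ha⟩ := hlm
  -- Step 2: τ y ≤ τ x pointwise
  have hle : τ y ≤ τ x := by
    intro p
    have h1 : l p = (τ x p : ℤ) - (τ y p : ℤ) := by
      have := congrArg (fun f => f p) hxy
      simp only [Finsupp.add_apply, hι] at this
      omega
    have h2 : (m : ℤ) * l p = (τ a p : ℤ) := by
      have := congrArg (fun f => f p) ha
      simpa [hι] using this
    have hz : (0:ℤ) ≤ (τ a p : ℤ) := Int.natCast_nonneg _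
    rw [h1] at h2
    have hm' : (0:ℤ) < m := by exact_mod_cast hm
    nlinarith [hz, hm', h2]
  -- Step 3: use condition (i)
  have hx : τ x = τ y + (τ x - τ y) := (add_tsub_cancel_of_le hle).symm
  obtain ⟨c, hc⟩ := hcond1 x y (τ x - τ y) hx
  refine ⟨c, ?_⟩
  have : ι (τ x) = ι (τ y) + ι (τ c) := by rw [hx, hc, map_add]
  rw [this, add_comm (ι (τ y))] at hxy
  exact add_right_cancel hxy
end

section
/- Let Γ be the submonoid of the multiplicative monoid of positive integers generated by {10, 14, 15, 21}, and D the submonoid generated by {2, 3, 5, 7}. The monoid homomorphism α: Γ → ℕ₊ determined by α(10)=10, α(14)=2, α(15)=15, α(21)=3 is a well-defined injective monoid homomorphism, but there is no injective monoid homomorphism β: D → ℕ₊ extending α (i.e., with β ∘ ι = α where ι: Γ ↪ D is the inclusion). -/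
private lemma factpq {p q : ℕ} (hp : p.Prime) (hq : q.Prime) (r : ℕ) :
    (p*q).factorization r = (if r = p then 1 else 0) + (if r = q then 1 else 0) := by
  rw [Nat.factorization_mul hp.ne_zero hq.ne_zero]
  simp [hp.factorization, hq.factorization, Finsupp.single_apply, eq_comm]

private lemma p5 : Nat.Prime 5 := by norm_num
private lemma p3 : Nat.Prime 3 := by norm_num
private lemma p7 : Nat.Prime 7 := by norm_num

/-- the "forget the prime 7" monoid homomorphism on `ℕ+`. -/
private def sevenFree : ℕ+ →* ℕ+ where
  toFun n := ⟨ordCompl[7] (n : ℕ), Nat.ordCompl_pos 7 n.ne_zero⟩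
  map_one' := PNat.coe_injective (by simp)
  map_mul' a b := PNat.coe_injective (Nat.ordCompl_mul a b 7)

private lemma v14 : ordCompl[7] ((14:ℕ+):ℕ) = ((2:ℕ+):ℕ) := by
  norm_num [show ((14:ℕ+):ℕ) = 2*7 from rfl, factpq Nat.prime_two p7]
private lemma v10 : ordCompl[7] ((10:ℕ+):ℕ) = ((10:ℕ+):ℕ) := by
  norm_num [show ((10:ℕ+):ℕ) = 2*5 from rfl, factpq Nat.prime_two p5]
private lemma v15 : ordCompl[7] ((15:ℕ+):ℕ) = ((15:ℕ+):ℕ) := by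
  norm_num [show ((15:ℕ+):ℕ) = 3*5 from rfl, factpq p3 p5]
private lemma v21 : ordCompl[7] ((21:ℕ+):ℕ) = ((3:ℕ+):ℕ) := by
  norm_num [show ((21:ℕ+):ℕ) = 3*7 from rfl, factpq p3 p7]

private lemma key : ∀ n ∈ Submonoid.closure ({10, 14, 15, 21} : Set ℕ+),
    ((n:ℕ)).factorization 2 + ((n:ℕ)).factorization 3
      = ((n:ℕ)).factorization 5 + ((n:ℕ)).factorization 7 := by
  intro n hn
  induction hn using Submonoid.closure_induction with
  | mem x hx =>
      rcases hx with h | h | h | h <;> subst h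
      · norm_num [show ((10:ℕ+):ℕ) = 2*5 from rfl, factpq Nat.prime_two p5]
      · norm_num [show ((14:ℕ+):ℕ) = 2*7 from rfl, factpq Nat.prime_two p7]
      · norm_num [show ((15:ℕ+):ℕ) = 3*5 from rfl, factpq p3 p5]
      · norm_num [show ((21:ℕ+):ℕ) = 3*7 from rfl, factpq p3 p7]
  | one => simp
  | mul x y hx hy ihx ihy =>
      push_cast
      rw [Nat.factorization_mul x.ne_zero y.ne_zero]
      simp only [Finsupp.add_apply]
      omega

/-- the embedding of the multiplicative monoid `Γ = ⟨10,14,15,21⟩ ⊆ ℕ₊`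
given by `10 ↦ 10, 14 ↦ 2, 15 ↦ 15, 21 ↦ 3` is a well-defined injective monoid
homomorphism, but it does not extend to an injective monoid homomorphism of
`D = ⟨2,3,5,7⟩` (the divisor theory of `Γ`) into `ℕ₊`. -/
theorem no_extension_of_alpha_condition_star :
    ∃ α : (Submonoid.closure ({10, 14, 15, 21} : Set ℕ+)) →* ℕ+,
      Function.Injective α ∧
      α ⟨10, Submonoid.subset_closure (by simp)⟩ = 10 ∧
      α ⟨14, Submonoid.subset_closure (by simp)⟩ = 2 ∧
      α ⟨15, Submonoid.subset_closure (by simp)⟩ = 15 ∧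
      α ⟨21, Submonoid.subset_closure (by simp)⟩ = 3 ∧
      ¬ ∃ β : (Submonoid.closure ({2, 3, 5, 7} : Set ℕ+)) →* ℕ+,
          Function.Injective β ∧
          ∀ (x : ℕ+) (hx : x ∈ Submonoid.closure ({10, 14, 15, 21} : Set ℕ+))
            (hx' : x ∈ Submonoid.closure ({2, 3, 5, 7} : Set ℕ+)),
            β ⟨x, hx'⟩ = α ⟨x, hx⟩ := by
  set Γ := Submonoid.closure ({10, 14, 15, 21} : Set ℕ+) with hΓ
  refine ⟨sevenFree.comp Γ.subtype, ?_, ?_, ?_, ?_, ?_, ?_⟩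
  · -- injectivity
    intro x y h
    have hcc : ordCompl[7] ((x:ℕ+):ℕ) = ordCompl[7] ((y:ℕ+):ℕ) :=
      congrArg (fun t : ℕ+ => (t:ℕ)) h
    have herase : (Finsupp.erase 7 ((x:ℕ+):ℕ).factorization)
        = Finsupp.erase 7 ((y:ℕ+):ℕ).factorization := by
      rw [← Nat.factorization_ordCompl, ← Nat.factorization_ordCompl, hcc]
    have hp : ∀ p : ℕ, p ≠ 7 →
        ((x:ℕ+):ℕ).factorization p = ((y:ℕ+):ℕ).factorization p := by
      intro p hp
      have := congrArg (fun f => f p) herase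
      simpa [Finsupp.erase_ne hp] using this
    have h2 := hp 2 (by norm_num)
    have h3 := hp 3 (by norm_num)
    have h5 := hp 5 (by norm_num)
    have hx7 := key (x:ℕ+) x.2
    have hy7 := key (y:ℕ+) y.2
    have h7 : ((x:ℕ+):ℕ).factorization 7 = ((y:ℕ+):ℕ).factorization 7 := by omega
    have hxy : ((x:ℕ+):ℕ) = ((y:ℕ+):ℕ) := by
      conv_lhs => rw [← Nat.ordProj_mul_ordCompl_eq_self ((x:ℕ+):ℕ) 7]
      conv_rhs => rw [← Nat.ordProj_mul_ordCompl_eq_self ((y:ℕ+):ℕ) 7]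
      rw [hcc, h7]
    exact Subtype.ext (PNat.coe_injective hxy)
  · exact PNat.coe_injective v10
  · exact PNat.coe_injective v14
  · exact PNat.coe_injective v15
  · exact PNat.coe_injective v21
  · -- no extension
    rintro ⟨β, hβinj, hext⟩
    have m2 : (2:ℕ+) ∈ Submonoid.closure ({2, 3, 5, 7} : Set ℕ+) :=
      Submonoid.subset_closure (by simp)
    have m3 : (3:ℕ+) ∈ Submonoid.closure ({2, 3, 5, 7} : Set ℕ+) :=
      Submonoid.subset_closure (by simp)
    have m7 : (7:ℕ+) ∈ Submonoid.closure ({2, 3, 5, 7} : Set ℕ+) :=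
      Submonoid.subset_closure (by simp)
    have g14 : (14:ℕ+) ∈ Γ := Submonoid.subset_closure (by simp)
    have g21 : (21:ℕ+) ∈ Γ := Submonoid.subset_closure (by simp)
    have m14 : (14:ℕ+) ∈ Submonoid.closure ({2, 3, 5, 7} : Set ℕ+) := by
      rw [show (14:ℕ+) = 2 * 7 from rfl]; exact mul_mem m2 m7
    have m21 : (21:ℕ+) ∈ Submonoid.closure ({2, 3, 5, 7} : Set ℕ+) := by
      rw [show (21:ℕ+) = 3 * 7 from rfl]; exact mul_mem m3 m7
    have hb14 : β ⟨14, m14⟩ = 2 := by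
      rw [hext 14 g14 m14]; exact PNat.coe_injective v14
    have hb21 : β ⟨21, m21⟩ = 3 := by
      rw [hext 21 g21 m21]; exact PNat.coe_injective v21
    have e14 : (⟨14, m14⟩ : Submonoid.closure ({2, 3, 5, 7} : Set ℕ+))
        = ⟨2, m2⟩ * ⟨7, m7⟩ := rfl
    have e21 : (⟨21, m21⟩ : Submonoid.closure ({2, 3, 5, 7} : Set ℕ+))
        = ⟨3, m3⟩ * ⟨7, m7⟩ := rfl
    rw [e14, map_mul] at hb14
    rw [e21, map_mul] at hb21
    have hn14 : ((β ⟨2, m2⟩ : ℕ+) : ℕ) * ((β ⟨7, m7⟩ : ℕ+) : ℕ) = 2 := by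
      have := congrArg (fun t : ℕ+ => (t:ℕ)) hb14
      simpa using this
    have hn21 : ((β ⟨3, m3⟩ : ℕ+) : ℕ) * ((β ⟨7, m7⟩ : ℕ+) : ℕ) = 3 := by
      have := congrArg (fun t : ℕ+ => (t:ℕ)) hb21
      simpa using this
    have hd2 : ((β ⟨7, m7⟩ : ℕ+) : ℕ) ∣ 2 := Dvd.intro_left _ hn14
    have hd3 : ((β ⟨7, m7⟩ : ℕ+) : ℕ) ∣ 3 := Dvd.intro_left _ hn21
    have h1 : ((β ⟨7, m7⟩ : ℕ+) : ℕ) = 1 :=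
      Nat.eq_one_of_dvd_one ((Nat.dvd_gcd hd2 hd3).trans (by norm_num))
    have hβ7 : β ⟨7, m7⟩ = 1 := PNat.coe_injective h1
    have h71 : (⟨7, m7⟩ : Submonoid.closure ({2, 3, 5, 7} : Set ℕ+)) = 1 := by
      apply hβinj; rw [hβ7, map_one]
    have : (7:ℕ+) = 1 := by simpa using congrArg Subtype.val h71
    exact absurd this (by decide)
end

section
/- Let Γ be the submonoid of the multiplicative monoid of positive integers generated by {4, 6, 9}, and D the submonoid generated by {2, 3}. The map α: Γ → ℕ₊ determined by α(4)=20, α(6)=30, α(9)=45 is a well-defined injective monoid homomorphism, but there is no injective monoid homomorphism β: D → ℕ₊ with β(4)=20, β(6)=30, β(9)=45 (i.e., extending α along the inclusion Γ ⊆ D). -/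
/-!
Every element of `Γ = ⟨4, 6, 9⟩` has an even number `w` of prime factors (all of them `2` or `3`),
so `x ↦ 5 ^ (w x / 2) * x` is a monoid homomorphism on `Γ` sending `4, 6, 9` to `20, 30, 45`; it is
injective because `5` divides no element of `Γ`, so `x` is recovered as the `5`-free part of its
image. An extension `β` to `D = ⟨2, 3⟩` would give `β 2 * β 2 = β 4 = 20`, but `20` is not a square.
-/

def weight (n : ℕ+) : ℕ := (n : ℕ).factorization 2 + (n : ℕ).factorization 3

theorem weight_one : weight 1 = 0 := by
  simp [weight]

theorem weight_mul (m n : ℕ+) : weight (m * n) = weight m + weight n := by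
  simp only [weight, PNat.mul_coe, Nat.factorization_mul m.ne_zero n.ne_zero, Finsupp.add_apply]
  ring

theorem weight_two : weight 2 = 1 := by
  simp [weight, Nat.prime_two.factorization]

theorem weight_three : weight 3 = 1 := by
  simp [weight, Nat.prime_three.factorization]

theorem weight_eq_two_of_mem {x : ℕ+} (hx : x ∈ ({4, 6, 9} : Set ℕ+)) : weight x = 2 := by
  rcases hx with rfl | rfl | rfl
  · exact (weight_mul 2 2).trans (by rw [weight_two])
  · exact (weight_mul 2 3).trans (by rw [weight_two, weight_three])
  · exact (weight_mul 3 3).trans (by rw [weight_three])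

theorem even_weight_of_mem_closure {x : ℕ+} (hx : x ∈ Submonoid.closure ({4, 6, 9} : Set ℕ+)) :
    Even (weight x) := by
  induction hx using Submonoid.closure_induction with
  | mem y hy => simp [weight_eq_two_of_mem hy]
  | one => simp [weight_one]
  | mul a b _ _ ha hb => rw [weight_mul]; exact ha.add hb

theorem not_five_dvd_of_mem_closure {x : ℕ+} (hx : x ∈ Submonoid.closure ({4, 6, 9} : Set ℕ+)) :
    ¬ 5 ∣ (x : ℕ) := by
  induction hx using Submonoid.closure_induction with
  | mem y hy => rcases hy with rfl | rfl | rfl <;> decide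
  | one => decide
  | mul a b _ _ ha hb =>
    rw [PNat.mul_coe, Nat.Prime.dvd_mul (by norm_num)]
    exact not_or_intro ha hb

def alpha : Submonoid.closure ({4, 6, 9} : Set ℕ+) →* ℕ+ where
  toFun x := 5 ^ (weight x / 2) * x
  map_one' := by simp [weight_one]
  map_mul' := by
    rintro ⟨a, ha⟩ ⟨b, hb⟩
    simp only [Submonoid.mk_mul_mk, weight_mul,
      Nat.add_div_of_dvd_right (even_iff_two_dvd.mp (even_weight_of_mem_closure ha)), pow_add]
    ring

theorem alpha_apply_of_mem {x : ℕ+} (hx : x ∈ ({4, 6, 9} : Set ℕ+)) :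
    alpha ⟨x, Submonoid.subset_closure hx⟩ = 5 * x := by
  simp [alpha, weight_eq_two_of_mem hx]

theorem alpha_injective : Function.Injective alpha := by
  rintro ⟨a, ha⟩ ⟨b, hb⟩ h
  have hab := congrArg (fun n : ℕ+ => ordCompl[5] (n : ℕ)) h
  simp only [alpha, MonoidHom.coe_mk, OneHom.coe_mk, PNat.mul_coe, PNat.pow_coe,
    PNat.val_ofNat] at hab
  rw [Nat.ordCompl_pow_mul_of_not_dvd _ (by norm_num) (not_five_dvd_of_mem_closure ha),
    Nat.ordCompl_pow_mul_of_not_dvd _ (by norm_num) (not_five_dvd_of_mem_closure hb)] at hab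
  exact Subtype.ext (PNat.coe_injective hab)

theorem mul_self_ne_twenty (n : ℕ+) : n * n ≠ 20 := by
  intro h
  have hn : (n : ℕ) * n = 20 := congrArg PNat.val h
  have : (n : ℕ) ≤ 4 := by nlinarith
  interval_cases (n : ℕ) <;> omega

/-- the embedding of the multiplicative monoid `Γ = ⟨4,6,9⟩ ⊆ ℕ₊`
given by `4 ↦ 20, 6 ↦ 30, 9 ↦ 45` is a well-defined injective monoid homomorphism,
but it does not extend to an injective monoid homomorphism of `D = ⟨2,3⟩`
(the divisor theory of `Γ`) into `ℕ₊`. -/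
theorem no_extension_of_alpha_condition_doublestar :
    ∃ α : (Submonoid.closure ({4, 6, 9} : Set ℕ+)) →* ℕ+,
      Function.Injective α ∧
      α ⟨4, Submonoid.subset_closure (by simp)⟩ = 20 ∧
      α ⟨6, Submonoid.subset_closure (by simp)⟩ = 30 ∧
      α ⟨9, Submonoid.subset_closure (by simp)⟩ = 45 ∧
      ¬ ∃ β : (Submonoid.closure ({2, 3} : Set ℕ+)) →* ℕ+,
          Function.Injective β ∧
          β ⟨4, by
              have h2 : (2 : ℕ+) ∈ Submonoid.closure ({2, 3} : Set ℕ+) :=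
                Submonoid.subset_closure (by simp)
              have : (4 : ℕ+) = 2 * 2 := rfl
              exact this ▸ mul_mem h2 h2⟩ = 20 ∧
          β ⟨6, by
              have h2 : (2 : ℕ+) ∈ Submonoid.closure ({2, 3} : Set ℕ+) :=
                Submonoid.subset_closure (by simp)
              have h3 : (3 : ℕ+) ∈ Submonoid.closure ({2, 3} : Set ℕ+) :=
                Submonoid.subset_closure (by simp)
              have : (6 : ℕ+) = 2 * 3 := rfl
              exact this ▸ mul_mem h2 h3⟩ = 30 ∧
          β ⟨9, by
              have h3 : (3 : ℕ+) ∈ Submonoid.closure ({2, 3} : Set ℕ+) :=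
                Submonoid.subset_closure (by simp)
              have : (9 : ℕ+) = 3 * 3 := rfl
              exact this ▸ mul_mem h3 h3⟩ = 45 := by
  refine ⟨alpha, alpha_injective, alpha_apply_of_mem (by simp), alpha_apply_of_mem (by simp),
    alpha_apply_of_mem (by simp), ?_⟩
  rintro ⟨β, -, hβ4, -, -⟩
  let two : Submonoid.closure ({2, 3} : Set ℕ+) := ⟨2, Submonoid.subset_closure (by simp)⟩
  exact mul_self_ne_twenty (β two) (by rw [← map_mul]; exact hβ4)
end

section
/- In the divisor theory setting, if q and q₁ are prime elements of a free commutative monoid D giving a divisor theory τ: Γ → D, and L(q) ⊆ L(q₁) where L(d) = {a ∈ Γ : d divides τ(a) in D}, then q = q₁. -/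
/-- in a divisor theory `τ : Γ → D` (with `D` the free commutative
monoid modelled additively as `P →₀ ℕ`, whose prime elements are the
`Finsupp.single p 1`), if `L(q) ⊆ L(q₁)` for two primes `q = single p 1`,
`q₁ = single p₁ 1`, where `L(d) = {a ∈ Γ : d ∣ τ(a)}`, then `q = q₁`. -/
theorem divisor_theory_prime_eq_of_L_subset
    (Γ : Type*) [AddCommMonoid Γ]
    (hΓunits : ∀ a b : Γ, a + b = 0 → a = 0)
    (P : Type*) (τ : Γ →+ (P →₀ ℕ))
    (hinj : Function.Injective τ)
    (hcond1 : ∀ (a b : Γ) (c₁ : P →₀ ℕ), τ a = τ b + c₁ → ∃ c : Γ, c₁ = τ c)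
    (hcond2 : ∀ d₁ d₂ : P →₀ ℕ,
      ({a : Γ | d₁ ≤ τ a} = {a : Γ | d₂ ≤ τ a}) → d₁ = d₂)
    (p p₁ : P)
    (hsub : {a : Γ | Finsupp.single p 1 ≤ τ a} ⊆ {a : Γ | Finsupp.single p₁ 1 ≤ τ a}) :
    p = p₁ := by
  classical
  have key := hcond2 (Finsupp.single p 1) (Finsupp.single p 1 ⊔ Finsupp.single p₁ 1) ?_
  · -- from single p 1 = single p 1 ⊔ single p₁ 1, get single p₁ 1 ≤ single p 1
    have hle : Finsupp.single p₁ 1 ≤ Finsupp.single p 1 := by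
      rw [key]; exact le_sup_right
    have h1 : (1 : ℕ) ≤ (Finsupp.single p 1 : P →₀ ℕ) p₁ := by
      simpa using hle p₁
    by_contra hne
    rw [Finsupp.single_apply, if_neg hne] at h1
    omega
  · ext a
    simp only [Set.mem_setOf_eq, sup_le_iff]
    exact ⟨fun h => ⟨h, hsub h⟩, fun h => h.1⟩
end

section
/- The map τ on the quadratic cone X = {(x₁,x₂,x₃,x₄) ∈ k⁴ : x₁x₄ = x₂x₃} sending (x₁,x₂,x₃,x₄) to (x₁, x₂ + x₁(x₃-x₂), x₃ + x₁(x₃-x₂), x₄ + (x₃+x₂)(x₃-x₂) + x₁(x₃-x₂)²) is a well-defined bijection of X onto itself, with inverse (x₁,x₂,x₃,x₄) ↦ (x₁, x₂ - x₁(x₃-x₂), x₃ - x₁(x₃-x₂), x₄ - (x₃+x₂)(x₃-x₂) + x₁(x₃-x₂)²). -/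
private def tauMap {k : Type*} [Field k]
    (p : {x : Fin 4 → k // x 0 * x 3 = x 1 * x 2}) :
    {x : Fin 4 → k // x 0 * x 3 = x 1 * x 2} :=
  ⟨![p.1 0,
      p.1 1 + p.1 0 * (p.1 2 - p.1 1),
      p.1 2 + p.1 0 * (p.1 2 - p.1 1),
      p.1 3 + (p.1 2 + p.1 1) * (p.1 2 - p.1 1) + p.1 0 * (p.1 2 - p.1 1) ^ 2], by
    simp only [Matrix.cons_val_zero, Matrix.cons_val_one, Matrix.head_cons,
      Matrix.cons_val_two, Matrix.cons_val_three, Matrix.tail_cons]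
    linear_combination p.2⟩

private def tauInvMap {k : Type*} [Field k]
    (p : {x : Fin 4 → k // x 0 * x 3 = x 1 * x 2}) :
    {x : Fin 4 → k // x 0 * x 3 = x 1 * x 2} :=
  ⟨![p.1 0,
      p.1 1 - p.1 0 * (p.1 2 - p.1 1),
      p.1 2 - p.1 0 * (p.1 2 - p.1 1),
      p.1 3 - (p.1 2 + p.1 1) * (p.1 2 - p.1 1) + p.1 0 * (p.1 2 - p.1 1) ^ 2], by
    simp only [Matrix.cons_val_zero, Matrix.cons_val_one, Matrix.head_cons,
      Matrix.cons_val_two, Matrix.cons_val_three, Matrix.tail_cons]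
    linear_combination p.2⟩

private lemma eta4 {α : Type*} (x : Fin 4 → α) : x = ![x 0, x 1, x 2, x 3] := by
  funext i; fin_cases i <;> rfl

private lemma vec4_congr {α : Type*} {a b c d a' b' c' d' : α}
    (h0 : a = a') (h1 : b = b') (h2 : c = c') (h3 : d = d') :
    ![a, b, c, d] = ![a', b', c', d'] := by rw [h0, h1, h2, h3]

private lemma tau_left_inv {k : Type*} [Field k] :
    Function.LeftInverse (tauInvMap (k := k)) (tauMap (k := k)) := by
  intro p
  apply Subtype.ext
  show _ = p.1
  conv_rhs => rw [eta4 p.1]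
  apply vec4_congr <;>
    simp only [tauMap, tauInvMap, Matrix.cons_val_zero, Matrix.cons_val_one, Matrix.head_cons,
      Matrix.cons_val_two, Matrix.cons_val_three, Matrix.tail_cons] <;> ring

private lemma tau_right_inv {k : Type*} [Field k] :
    Function.RightInverse (tauInvMap (k := k)) (tauMap (k := k)) := by
  intro p
  apply Subtype.ext
  show _ = p.1
  conv_rhs => rw [eta4 p.1]
  apply vec4_congr <;>
    simp only [tauMap, tauInvMap, Matrix.cons_val_zero, Matrix.cons_val_one, Matrix.head_cons,
      Matrix.cons_val_two, Matrix.cons_val_three, Matrix.tail_cons] <;> ring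

/-- the map `τ` is a well-defined bijection of the quadratic cone
`X = {x ∈ k⁴ : x₁x₄ = x₂x₃}` onto itself, with the indicated inverse. -/
theorem tau_bijection_of_quadratic_cone (k : Type*) [Field k] [CharZero k] :
    ∃ τ τinv : {x : Fin 4 → k // x 0 * x 3 = x 1 * x 2} →
        {x : Fin 4 → k // x 0 * x 3 = x 1 * x 2},
      (∀ p, (τ p).1 = ![p.1 0,
          p.1 1 + p.1 0 * (p.1 2 - p.1 1),
          p.1 2 + p.1 0 * (p.1 2 - p.1 1),
          p.1 3 + (p.1 2 + p.1 1) * (p.1 2 - p.1 1) + p.1 0 * (p.1 2 - p.1 1) ^ 2]) ∧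
      (∀ p, (τinv p).1 = ![p.1 0,
          p.1 1 - p.1 0 * (p.1 2 - p.1 1),
          p.1 2 - p.1 0 * (p.1 2 - p.1 1),
          p.1 3 - (p.1 2 + p.1 1) * (p.1 2 - p.1 1) + p.1 0 * (p.1 2 - p.1 1) ^ 2]) ∧
      Function.LeftInverse τinv τ ∧
      Function.RightInverse τinv τ ∧
      Function.Bijective τ :=
  ⟨tauMap, tauInvMap, fun _ => rfl, fun _ => rfl, tau_left_inv, tau_right_inv,
    tau_left_inv.injective, tau_right_inv.surjective⟩
end

section
/- Anick's automorphism ζ of k[y₁,y₂,y₃,y₄], given by y₁ ↦ y₁, y₂ ↦ y₂ + y₁Δ, y₃ ↦ y₃, y₄ ↦ y₄ + y₃Δ where Δ = y₁y₄ - y₂y₃, restricts to an automorphism of the subalgebra k[y₁y₃, y₁y₄, y₂y₃, y₂y₄] ⊆ k[y₁,y₂,y₃,y₄] (the degree-zero component of the grading with deg y₁ = deg y₂ = 1, deg y₃ = deg y₄ = -1). -/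
/-!
Anick's map is the time-one map of the family `ζ_c : y₂ ↦ y₂ + c y₁Δ, y₄ ↦ y₄ + c y₃Δ`.
Each `ζ_c` fixes `y₁`, `y₃` and `Δ`, hence `ζ_c ∘ ζ_d = ζ_{c+d}` and `ζ_{-c}` inverts `ζ_c`.
On the generators `x₁ = y₁y₃, x₂ = y₁y₄, x₃ = y₂y₃, x₄ = y₂y₄` of the cone algebra, where
`Δ = x₂ - x₃`, every `ζ_c` acts by polynomials in the `xᵢ`, so it maps the cone algebra into
itself; using this for `c` and `-c` shows that `ζ_c` maps it onto itself.
-/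

open MvPolynomial

theorem Subalgebra.map_algEquiv_eq_self {R A : Type*} [CommSemiring R] [Semiring A] [Algebra R A]
    (e : A ≃ₐ[R] A) {S : Subalgebra R A} (h : S.map e ≤ S) (h_symm : S.map e.symm ≤ S) :
    S.map e = S :=
  le_antisymm h fun x hx => ⟨e.symm x, h_symm ⟨x, hx, rfl⟩, e.apply_symm_apply x⟩

namespace Anick

variable {k : Type*} [CommRing k]

noncomputable def delta : MvPolynomial (Fin 4) k := X 0 * X 3 - X 1 * X 2

noncomputable def flow (c : k) : MvPolynomial (Fin 4) k →ₐ[k] MvPolynomial (Fin 4) k :=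
  aeval ![X 0, X 1 + C c * X 0 * delta, X 2, X 3 + C c * X 2 * delta]

@[simp] theorem flow_X_zero (c : k) : flow c (X 0) = X 0 := by simp [flow]
@[simp] theorem flow_X_one (c : k) : flow c (X 1) = X 1 + C c * X 0 * delta := by simp [flow]
@[simp] theorem flow_X_two (c : k) : flow c (X 2) = X 2 := by simp [flow]
@[simp] theorem flow_X_three (c : k) : flow c (X 3) = X 3 + C c * X 2 * delta := by simp [flow]

@[simp] theorem flow_delta (c : k) : flow c delta = delta := by
  simp [delta]; ring

theorem flow_zero : flow (0 : k) = AlgHom.id k _ := by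
  refine MvPolynomial.algHom_ext fun i => ?_
  fin_cases i <;> simp

theorem flow_comp_flow (c d : k) : (flow c).comp (flow d) = flow (c + d) := by
  refine MvPolynomial.algHom_ext fun i => ?_
  fin_cases i <;> simp <;> ring

noncomputable def flowEquiv (c : k) : MvPolynomial (Fin 4) k ≃ₐ[k] MvPolynomial (Fin 4) k :=
  AlgEquiv.ofAlgHom (flow c) (flow (-c)) (by rw [flow_comp_flow, add_neg_cancel, flow_zero])
    (by rw [flow_comp_flow, neg_add_cancel, flow_zero])

noncomputable def coneGens : Fin 4 → MvPolynomial (Fin 4) k :=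
  ![X 0 * X 2, X 0 * X 3, X 1 * X 2, X 1 * X 3]

noncomputable def coneFlow (c : k) : MvPolynomial (Fin 4) k →ₐ[k] MvPolynomial (Fin 4) k :=
  aeval ![X 0, X 1 + C c * X 0 * (X 1 - X 2), X 2 + C c * X 0 * (X 1 - X 2),
    X 3 + C c * (X 1 + X 2) * (X 1 - X 2) + C c ^ 2 * X 0 * (X 1 - X 2) ^ 2]

theorem flow_comp_aeval_coneGens (c : k) :
    (flow c).comp (aeval coneGens) = (aeval coneGens).comp (coneFlow c) := by
  refine MvPolynomial.algHom_ext fun i => ?_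
  fin_cases i <;> simp [coneGens, coneFlow, delta] <;> ring

theorem adjoin_eq_range_aeval_coneGens :
    Algebra.adjoin k
        ({X 0 * X 2, X 0 * X 3, X 1 * X 2, X 1 * X 3} : Set (MvPolynomial (Fin 4) k)) =
      (aeval (coneGens (k := k))).range := by
  rw [← Algebra.adjoin_range_eq_range_aeval]
  congr 1
  ext p
  simp only [coneGens, Matrix.range_cons, Matrix.range_empty, Set.union_empty,
    Set.union_singleton, Set.mem_insert_iff, Set.mem_union, Set.mem_singleton_iff]
  tauto

theorem map_flow_range_aeval_coneGens_le (c : k) :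
    (aeval (coneGens (k := k))).range.map (flow c) ≤ (aeval coneGens).range := by
  rw [← AlgHom.range_comp, flow_comp_aeval_coneGens]
  exact AlgHom.range_comp_le_range _ _

@[simp] theorem flowEquiv_toAlgHom (c : k) :
    (flowEquiv c : MvPolynomial (Fin 4) k →ₐ[k] _) = flow c :=
  rfl

@[simp] theorem flowEquiv_symm (c : k) : (flowEquiv c).symm = flowEquiv (-c) := by
  ext p; simp [flowEquiv]

theorem map_flow_range_aeval_coneGens (c : k) :
    (aeval (coneGens (k := k))).range.map (flow c) = (aeval coneGens).range := by
  simpa using Subalgebra.map_algEquiv_eq_self (flowEquiv c)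
    (by simpa using map_flow_range_aeval_coneGens_le c)
    (by simpa using map_flow_range_aeval_coneGens_le (-c))

theorem flow_one : flow (1 : k) = aeval ![X 0, X 1 + X 0 * (X 0 * X 3 - X 1 * X 2), X 2,
    X 3 + X 2 * (X 0 * X 3 - X 1 * X 2)] := by
  simp [flow, delta]

end Anick

open Anick in
theorem anick_restricts_to_cone_subalgebra_general (k : Type*) [Field k] :
    Subalgebra.map
      (aeval ![X 0, X 1 + X 0 * (X 0 * X 3 - X 1 * X 2), X 2,
          X 3 + X 2 * (X 0 * X 3 - X 1 * X 2)] :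
        MvPolynomial (Fin 4) k →ₐ[k] MvPolynomial (Fin 4) k)
      (Algebra.adjoin k
        ({X 0 * X 2, X 0 * X 3, X 1 * X 2, X 1 * X 3} : Set (MvPolynomial (Fin 4) k))) =
    Algebra.adjoin k
      ({X 0 * X 2, X 0 * X 3, X 1 * X 2, X 1 * X 3} : Set (MvPolynomial (Fin 4) k)) ∧
    ∃ e : (Algebra.adjoin k
        ({X 0 * X 2, X 0 * X 3, X 1 * X 2, X 1 * X 3} : Set (MvPolynomial (Fin 4) k))) ≃ₐ[k]
        (Algebra.adjoin k
        ({X 0 * X 2, X 0 * X 3, X 1 * X 2, X 1 * X 3} : Set (MvPolynomial (Fin 4) k))),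
      ∀ a, (e a : MvPolynomial (Fin 4) k) =
        (aeval ![X 0, X 1 + X 0 * (X 0 * X 3 - X 1 * X 2), X 2,
          X 3 + X 2 * (X 0 * X 3 - X 1 * X 2)] :
          MvPolynomial (Fin 4) k →ₐ[k] MvPolynomial (Fin 4) k) (a : MvPolynomial (Fin 4) k) := by
  rw [← flow_one, adjoin_eq_range_aeval_coneGens]
  have hmap := map_flow_range_aeval_coneGens (1 : k)
  exact ⟨hmap, ((flowEquiv 1).subalgebraMap _).trans (Subalgebra.equivOfEq _ _ hmap),
    fun _ => rfl⟩

/-- Anick's automorphism `ζ` restricts to an automorphism of the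
subalgebra `k[y₁y₃, y₁y₄, y₂y₃, y₂y₄]` (the degree-zero part of the grading
`deg y₁ = deg y₂ = 1`, `deg y₃ = deg y₄ = -1`). -/
theorem anick_restricts_to_cone_subalgebra (k : Type*) [Field k] [CharZero k] :
    Subalgebra.map
      (aeval ![X 0, X 1 + X 0 * (X 0 * X 3 - X 1 * X 2), X 2,
          X 3 + X 2 * (X 0 * X 3 - X 1 * X 2)] :
        MvPolynomial (Fin 4) k →ₐ[k] MvPolynomial (Fin 4) k)
      (Algebra.adjoin k
        ({X 0 * X 2, X 0 * X 3, X 1 * X 2, X 1 * X 3} : Set (MvPolynomial (Fin 4) k))) =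
    Algebra.adjoin k
      ({X 0 * X 2, X 0 * X 3, X 1 * X 2, X 1 * X 3} : Set (MvPolynomial (Fin 4) k)) ∧
    ∃ e : (Algebra.adjoin k
        ({X 0 * X 2, X 0 * X 3, X 1 * X 2, X 1 * X 3} : Set (MvPolynomial (Fin 4) k))) ≃ₐ[k]
        (Algebra.adjoin k
        ({X 0 * X 2, X 0 * X 3, X 1 * X 2, X 1 * X 3} : Set (MvPolynomial (Fin 4) k))),
      ∀ a, (e a : MvPolynomial (Fin 4) k) =
        (aeval ![X 0, X 1 + X 0 * (X 0 * X 3 - X 1 * X 2), X 2,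
          X 3 + X 2 * (X 0 * X 3 - X 1 * X 2)] :
          MvPolynomial (Fin 4) k →ₐ[k] MvPolynomial (Fin 4) k) (a : MvPolynomial (Fin 4) k) :=
  anick_restricts_to_cone_subalgebra_general k
end

section
/- Anick's automorphism of k[y₁,y₂,y₃,y₄,y₅] extended by y₅ ↦ y₅ equals the composition of the six elementary automorphisms: (1) y₅ ↦ y₅ + (y₁y₄ - y₂y₃); (2) y₂ ↦ y₂ + y₁y₅; (3) y₄ ↦ y₄ + y₃y₅; (4) y₅ ↦ y₅ - (y₁y₄ - y₂y₃); (5) y₂ ↦ y₂ - y₁y₅; (6) y₄ ↦ y₄ - y₃y₅ — composed in an appropriate order yields the map y₁ ↦ y₁, y₂ ↦ y₂ + y₁(y₁y₄-y₂y₃), y₃ ↦ y₃, y₄ ↦ y₄ + y₃(y₁y₄-y₂y₃), y₅ ↦ y₅. -/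
open MvPolynomial

/-- Anick's automorphism of `k[y₁,…,y₅]`, extended by `y₅ ↦ y₅`, is the
composition of the six elementary automorphisms from the paper: first
`y₅ ↦ y₅+(y₁y₄-y₂y₃)`, then `y₂ ↦ y₂+y₁y₅`, then `y₄ ↦ y₄+y₃y₅`, then
`y₅ ↦ y₅-(y₁y₄-y₂y₃)`, then `y₂ ↦ y₂-y₁y₅`, then `y₄ ↦ y₄-y₃y₅`.  (Substituting
step by step into the variables corresponds to composing the algebra endomorphisms
in the displayed order.) -/
theorem anick_stably_tame (k : Type*) [Field k] [CharZero k] :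
    (aeval ![X 0, X 1 + X 0 * (X 0 * X 3 - X 1 * X 2), X 2,
        X 3 + X 2 * (X 0 * X 3 - X 1 * X 2), X 4] :
      MvPolynomial (Fin 5) k →ₐ[k] MvPolynomial (Fin 5) k) =
    (aeval ![X 0, X 1, X 2, X 3, X 4 + (X 0 * X 3 - X 1 * X 2)] :
        MvPolynomial (Fin 5) k →ₐ[k] MvPolynomial (Fin 5) k).comp
      ((aeval ![X 0, X 1 + X 0 * X 4, X 2, X 3, X 4] :
          MvPolynomial (Fin 5) k →ₐ[k] MvPolynomial (Fin 5) k).comp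
        ((aeval ![X 0, X 1, X 2, X 3 + X 2 * X 4, X 4] :
            MvPolynomial (Fin 5) k →ₐ[k] MvPolynomial (Fin 5) k).comp
          ((aeval ![X 0, X 1, X 2, X 3, X 4 - (X 0 * X 3 - X 1 * X 2)] :
              MvPolynomial (Fin 5) k →ₐ[k] MvPolynomial (Fin 5) k).comp
            ((aeval ![X 0, X 1 - X 0 * X 4, X 2, X 3, X 4] :
                MvPolynomial (Fin 5) k →ₐ[k] MvPolynomial (Fin 5) k).comp
              (aeval ![X 0, X 1, X 2, X 3 - X 2 * X 4, X 4] :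
                MvPolynomial (Fin 5) k →ₐ[k] MvPolynomial (Fin 5) k))))) := by
  apply MvPolynomial.algHom_ext
  intro i
  fin_cases i <;>
    simp [Matrix.cons_val_zero, Matrix.cons_val_one, Fin.isValue] <;> ring
end

section
/- Let I = (y₁, y₂) be the ideal of k[y₁,y₂,y₃,y₄] generated by y₁ and y₂, and suppose f, g ∈ I³. Then the Jacobian determinant of the map ρ: (y₁,y₂,y₃,y₄) ↦ (y₁ - f, y₂ + y₁(y₁y₄-y₂y₃) - g, y₃, y₄) is congruent to 1 - y₁y₃ modulo I². In particular det(Jρ) is not a nonzero constant, so ρ is not a polynomial automorphism of k⁴. -/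
/-!
A partial derivative of an element of `I³` lies in `I²`, and expanding the Jacobian determinant
of `ρ` shows that every term involving `f` or `g` carries such a derivative, so
`det Jρ ≡ 1 - y₁y₃ (mod I²)`. Restricting to the line `(t, 0, 1, 0)` sends `I²` into `(t²)`,
so the restriction of `det Jρ` has `t`-coefficient `-1`: it is neither constant nor a unit.
On the other hand, by the chain rule the Jacobian of a map with a polynomial inverse is invertible.
-/

open MvPolynomial

theorem Derivation.apply_mem_pow_of_mem_pow_succ {R A : Type*} [CommSemiring R] [CommSemiring A]
    [Algebra R A] (D : Derivation R A A) (I : Ideal A) {n : ℕ} {a : A} (ha : a ∈ I ^ (n + 1)) :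
    D a ∈ I ^ n := by
  induction n generalizing a with
  | zero => simp [Ideal.one_eq_top]
  | succ n ih =>
    rw [pow_succ] at ha
    refine Submodule.mul_induction_on ha (fun b hb c hc => ?_) (fun x y hx hy => ?_)
    · rw [D.leibniz, smul_eq_mul, smul_eq_mul, mul_comm c, pow_succ]
      exact add_mem (Ideal.mul_mem_right _ _ hb) (Ideal.mul_mem_mul (ih hb) hc)
    · rw [map_add]; exact add_mem hx hy

theorem MvPolynomial.pderiv_aeval {σ τ R : Type*} [CommSemiring R] [Fintype σ]
    (g : σ → MvPolynomial τ R) (i : τ) (p : MvPolynomial σ R) :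
    pderiv i (aeval g p) = ∑ j, aeval g (pderiv j p) * pderiv i (g j) := by
  classical
  induction p using MvPolynomial.induction_on with
  | C a => simp
  | add p q hp hq => simp only [map_add, hp, hq, add_mul, Finset.sum_add_distrib]
  | mul_X p n hp =>
    simp only [map_mul, aeval_X, pderiv_mul, map_add, add_mul, Finset.sum_add_distrib, hp,
      pderiv_X, Finset.sum_mul, Pi.single_apply]
    simp [mul_right_comm]

namespace MvPolynomial

variable {σ R : Type*} [CommRing R]

noncomputable def jacobian (F : σ → MvPolynomial σ R) : Matrix σ σ (MvPolynomial σ R) :=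
  Matrix.of fun i j => pderiv j (F i)

theorem isUnit_det_jacobian_of_comp_eq_id [Fintype σ] [DecidableEq σ]
    (F : σ → MvPolynomial σ R) (φ : MvPolynomial σ R →ₐ[R] MvPolynomial σ R)
    (h : (aeval F).comp φ = AlgHom.id R _) : IsUnit (jacobian F).det := by
  let A : Matrix σ σ (MvPolynomial σ R) := Matrix.of fun l j => aeval F (pderiv j (φ (X l)))
  have hA : A * jacobian F = 1 := by
    refine Matrix.ext fun l i => ?_
    have hX : aeval F (φ (X l)) = X l := DFunLike.congr_fun h (X l)
    rw [Matrix.mul_apply, Matrix.one_apply]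
    simp only [A, jacobian, Matrix.of_apply]
    rw [← pderiv_aeval, hX, pderiv_X, Pi.single_apply]
  exact .of_mul_eq_one_right A.det (by rw [← Matrix.det_mul, hA, Matrix.det_one])

end MvPolynomial

noncomputable abbrev planeIdeal (k : Type*) [CommRing k] : Ideal (MvPolynomial (Fin 4) k) :=
  Ideal.span {X 0, X 1}

section Rho

variable {k : Type*} [CommRing k]

noncomputable def rho (f g : MvPolynomial (Fin 4) k) : Fin 4 → MvPolynomial (Fin 4) k :=
  ![X 0 - f, X 1 + X 0 * (X 0 * X 3 - X 1 * X 2) - g, X 2, X 3]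

theorem det_jacobian_rho (f g : MvPolynomial (Fin 4) k) :
    (jacobian (rho f g)).det = 1 - X 0 * X 2 +
      (pderiv 1 f * (2 * X 0 * X 3 - X 1 * X 2 - pderiv 0 g)
        - pderiv 0 f * (1 - X 0 * X 2 - pderiv 1 g) - pderiv 1 g) := by
  simp [jacobian, rho, Matrix.det_succ_row_zero, Fin.sum_univ_succ, Pi.single_apply,
    Fin.succAbove, Fin.succ]
  ring

theorem det_jacobian_rho_sub_mem_planeIdeal_sq {f g : MvPolynomial (Fin 4) k}
    (hf : f ∈ planeIdeal k ^ 3) (hg : g ∈ planeIdeal k ^ 3) :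
    (jacobian (rho f g)).det - (1 - X 0 * X 2) ∈ planeIdeal k ^ 2 := by
  have hd : ∀ i, ∀ p ∈ planeIdeal k ^ 3, pderiv i p ∈ planeIdeal k ^ 2 :=
    fun i p hp => (pderiv i).apply_mem_pow_of_mem_pow_succ _ hp
  rw [det_jacobian_rho, add_sub_cancel_left]
  exact sub_mem (sub_mem (Ideal.mul_mem_right _ _ (hd 1 f hf))
    (Ideal.mul_mem_right _ _ (hd 0 f hf))) (hd 1 g hg)

noncomputable def evalLine : MvPolynomial (Fin 4) k →ₐ[k] Polynomial k :=
  aeval ![Polynomial.X, 0, 1, 0]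

theorem evalLine_mem_span_X_pow {n : ℕ} {e : MvPolynomial (Fin 4) k}
    (he : e ∈ planeIdeal k ^ n) :
    evalLine e ∈ Ideal.span {Polynomial.X ^ n} := by
  have hI : (planeIdeal k).map evalLine ≤ Ideal.span {(Polynomial.X : Polynomial k)} := by
    rw [Ideal.map_le_iff_le_comap, Ideal.span_le]
    rintro x (rfl | rfl) <;> simp [evalLine]
  rw [← Ideal.span_singleton_pow]
  refine Ideal.pow_right_mono hI n ?_
  rw [← Ideal.map_pow]
  exact Ideal.mem_map_of_mem _ he

theorem coeff_evalLine_one_eq_neg_one {d : MvPolynomial (Fin 4) k}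
    (hd : d - (1 - X 0 * X 2) ∈ planeIdeal k ^ 2) :
    (evalLine d).coeff 1 = -1 := by
  obtain ⟨b, hb⟩ := Ideal.mem_span_singleton'.1 (evalLine_mem_span_X_pow hd)
  rw [← sub_add_cancel d (1 - X 0 * X 2), map_add, ← hb]
  simp [evalLine, Polynomial.coeff_mul_X_pow', Polynomial.coeff_one]

theorem ne_C_of_sub_mem_planeIdeal_sq [Nontrivial k] {d : MvPolynomial (Fin 4) k}
    (hd : d - (1 - X 0 * X 2) ∈ planeIdeal k ^ 2) (c : k) : d ≠ C c := by
  rintro rfl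
  simpa [evalLine] using coeff_evalLine_one_eq_neg_one hd

theorem not_isUnit_of_sub_mem_planeIdeal_sq [IsDomain k] {d : MvPolynomial (Fin 4) k}
    (hd : d - (1 - X 0 * X 2) ∈ planeIdeal k ^ 2) : ¬IsUnit d := by
  intro hu
  obtain ⟨c, -, hc⟩ := Polynomial.isUnit_iff.1 (hu.map evalLine)
  simpa [← hc] using coeff_evalLine_one_eq_neg_one hd

end Rho

theorem rho_jacobian_not_constant_general (k : Type*) [Field k]
    (f g : MvPolynomial (Fin 4) k)
    (hf : f ∈ (Ideal.span ({X 0, X 1} : Set (MvPolynomial (Fin 4) k))) ^ 3)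
    (hg : g ∈ (Ideal.span ({X 0, X 1} : Set (MvPolynomial (Fin 4) k))) ^ 3) :
    (Matrix.det (Matrix.of fun i j => pderiv j
        ((![X 0 - f, X 1 + X 0 * (X 0 * X 3 - X 1 * X 2) - g, X 2, X 3] :
          Fin 4 → MvPolynomial (Fin 4) k) i))
      - (1 - X 0 * X 2))
      ∈ (Ideal.span ({X 0, X 1} : Set (MvPolynomial (Fin 4) k))) ^ 2 ∧
    (∀ c : k, Matrix.det (Matrix.of fun i j => pderiv j
        ((![X 0 - f, X 1 + X 0 * (X 0 * X 3 - X 1 * X 2) - g, X 2, X 3] :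
          Fin 4 → MvPolynomial (Fin 4) k) i)) ≠ C c) ∧
    ¬ ∃ σ : MvPolynomial (Fin 4) k →ₐ[k] MvPolynomial (Fin 4) k,
        (aeval ![X 0 - f, X 1 + X 0 * (X 0 * X 3 - X 1 * X 2) - g, X 2, X 3] :
          MvPolynomial (Fin 4) k →ₐ[k] MvPolynomial (Fin 4) k).comp σ =
            AlgHom.id k (MvPolynomial (Fin 4) k) ∧
        σ.comp (aeval ![X 0 - f, X 1 + X 0 * (X 0 * X 3 - X 1 * X 2) - g, X 2, X 3]) =
            AlgHom.id k (MvPolynomial (Fin 4) k) := by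
  have hdet := det_jacobian_rho_sub_mem_planeIdeal_sq hf hg
  refine ⟨hdet, ne_C_of_sub_mem_planeIdeal_sq hdet, ?_⟩
  rintro ⟨σ, hσ, -⟩
  exact not_isUnit_of_sub_mem_planeIdeal_sq hdet (isUnit_det_jacobian_of_comp_eq_id _ σ hσ)

/-- if `f, g ∈ I³` with `I = (y₁,y₂)`, then the Jacobian determinant of
`ρ : (y₁,y₂,y₃,y₄) ↦ (y₁-f, y₂+y₁(y₁y₄-y₂y₃)-g, y₃, y₄)` is congruent to `1 - y₁y₃`
modulo `I²`; in particular it is not constant, and `ρ` is not an automorphism. -/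
theorem rho_jacobian_not_constant (k : Type*) [Field k] [CharZero k]
    (f g : MvPolynomial (Fin 4) k)
    (hf : f ∈ (Ideal.span ({X 0, X 1} : Set (MvPolynomial (Fin 4) k))) ^ 3)
    (hg : g ∈ (Ideal.span ({X 0, X 1} : Set (MvPolynomial (Fin 4) k))) ^ 3) :
    (Matrix.det (Matrix.of fun i j => pderiv j
        ((![X 0 - f, X 1 + X 0 * (X 0 * X 3 - X 1 * X 2) - g, X 2, X 3] :
          Fin 4 → MvPolynomial (Fin 4) k) i))
      - (1 - X 0 * X 2))
      ∈ (Ideal.span ({X 0, X 1} : Set (MvPolynomial (Fin 4) k))) ^ 2 ∧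
    (∀ c : k, Matrix.det (Matrix.of fun i j => pderiv j
        ((![X 0 - f, X 1 + X 0 * (X 0 * X 3 - X 1 * X 2) - g, X 2, X 3] :
          Fin 4 → MvPolynomial (Fin 4) k) i)) ≠ C c) ∧
    ¬ ∃ σ : MvPolynomial (Fin 4) k →ₐ[k] MvPolynomial (Fin 4) k,
        (aeval ![X 0 - f, X 1 + X 0 * (X 0 * X 3 - X 1 * X 2) - g, X 2, X 3] :
          MvPolynomial (Fin 4) k →ₐ[k] MvPolynomial (Fin 4) k).comp σ =
            AlgHom.id k (MvPolynomial (Fin 4) k) ∧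
        σ.comp (aeval ![X 0 - f, X 1 + X 0 * (X 0 * X 3 - X 1 * X 2) - g, X 2, X 3]) =
            AlgHom.id k (MvPolynomial (Fin 4) k) :=
  rho_jacobian_not_constant_general k f g hf hg
end

section
/- In the polynomial ring k[y₁,y₂,y₃,y₄] graded by deg y₁ = deg y₂ = 1, deg y₃ = deg y₄ = -1, every grading-preserving elementary automorphism (one adding to a single variable a polynomial in the others, required to be homogeneous of matching degree) has one of the forms: y₁ ↦ y₁ + y₂H(y₂y₃, y₂y₄); y₂ ↦ y₂ + y₁H(y₁y₃, y₁y₄); y₃ ↦ y₃ + y₄H(y₁y₄, y₂y₄); y₄ ↦ y₄ + y₃H(y₁y₃, y₂y₃) (fixing the other variables), or is a diagonal scaling, up to degree-preserving linear maps within {y₁,y₂} and {y₃,y₄}. -/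
open MvPolynomial

lemma weight_calc (d : Fin 4 →₀ ℕ) :
    Finsupp.weight (![1, 1, -1, -1] : Fin 4 → ℤ) d
      = (d 0 : ℤ) + d 1 - d 2 - d 3 := by
  rw [Finsupp.weight_apply, Finsupp.sum_fintype _ _ (by simp)]
  simp [Fin.sum_univ_four]
  ring

lemma key_s17 (k : Type*) [CommRing k] (i₀ s p q : Fin 4)
    (hcov : ∀ j : Fin 4, j = i₀ ∨ j = s ∨ j = p ∨ j = q)
    (his : i₀ ≠ s) (hip : i₀ ≠ p) (hiq : i₀ ≠ q)
    (hsp : s ≠ p) (hsq : s ≠ q) (hpq : p ≠ q)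
    (f : MvPolynomial (Fin 4) k)
    (h : ∀ d ∈ f.support, d i₀ = 0 ∧ d s = d p + d q + 1) :
    ∃ H : MvPolynomial (Fin 2) k, f = X s * aeval ![X s * X p, X s * X q] H := by
  refine ⟨∑ d ∈ f.support, C (coeff d f) * X 0 ^ (d p) * X 1 ^ (d q), ?_⟩
  rw [map_sum, Finset.mul_sum]
  conv_lhs => rw [f.as_sum]
  refine Finset.sum_congr rfl fun d hd => ?_
  obtain ⟨h0, hs⟩ := h d hd
  have hdd : d = Finsupp.single s (d s) + Finsupp.single p (d p) + Finsupp.single q (d q) := by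
    ext j
    rcases hcov j with rfl | rfl | rfl | rfl <;>
      simp [Finsupp.single_apply, his.symm, hip.symm, hiq.symm, hsp, hsq, hpq,
        hsp.symm, hsq.symm, hpq.symm, h0]
  rw [map_mul, map_mul, map_pow, map_pow, aeval_C, aeval_X, aeval_X]
  simp only [Matrix.cons_val_zero, Matrix.cons_val_one, Matrix.head_cons, algebraMap_eq]
  rw [mul_pow, mul_pow]
  have : X s * (C (coeff d f) * (X s ^ d p * X p ^ d p) * (X s ^ d q * X q ^ d q))
      = C (coeff d f) * (X (R := k) s ^ (d p + d q + 1) * X p ^ d p * X q ^ d q) := by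
    ring
  rw [this, ← hs, X_pow_eq_monomial, X_pow_eq_monomial, X_pow_eq_monomial,
    monomial_mul, monomial_mul, ← hdd, mul_one, mul_one, C_mul_monomial, mul_one]

lemma lin_case (k : Type*) [Field k] (g : MvPolynomial (Fin 4) k)
    (hg : g ∈ Submodule.span k (Set.range (X : Fin 4 → MvPolynomial (Fin 4) k)))
    (m : ℤ) (hh : IsWeightedHomogeneous (![1, 1, -1, -1] : Fin 4 → ℤ) g m) :
    (m = 1 → g ∈ Submodule.span k ({X 0, X 1} : Set (MvPolynomial (Fin 4) k))) ∧
    (m = -1 → g ∈ Submodule.span k ({X 2, X 3} : Set (MvPolynomial (Fin 4) k))) := by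
  rw [Finsupp.mem_span_range_iff_exists_finsupp] at hg
  obtain ⟨c, hc⟩ := hg
  have hcoeff : ∀ j : Fin 4, coeff (Finsupp.single j 1) g = c j := by
    intro j
    rw [← hc, Finsupp.sum, coeff_sum]
    simp only [coeff_smul, coeff_X', smul_eq_mul]
    rw [Finset.sum_eq_single j]
    · simp
    · intro b _ hbj
      simp [Finsupp.single_left_inj (one_ne_zero), hbj]
    · intro hj
      simp [Finsupp.notMem_support_iff.mp hj]
  have hzero : ∀ j : Fin 4, Finsupp.weight (![1, 1, -1, -1] : Fin 4 → ℤ)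
      (Finsupp.single j 1) ≠ m → c j = 0 := by
    intro j hj
    by_contra hcj
    exact hj (hh (by rw [hcoeff j]; exact hcj))
  have hmem : ∀ (S : Set (MvPolynomial (Fin 4) k)), (∀ i : Fin 4, c i ≠ 0 → X i ∈ S) →
      g ∈ Submodule.span k S := by
    intro S hS
    rw [← hc]
    exact Submodule.sum_mem _ fun i hi => Submodule.smul_mem _ _
      (Submodule.subset_span (hS i (Finsupp.mem_support_iff.mp hi)))
  constructor
  · rintro rfl
    refine hmem _ fun i hi => ?_
    fin_cases i
    · exact Or.inl rfl
    · exact Or.inr rfl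
    · exact absurd (hzero 2 (by rw [weight_calc]; simp)) hi
    · exact absurd (hzero 3 (by rw [weight_calc]; simp)) hi
  · rintro rfl
    refine hmem _ fun i hi => ?_
    fin_cases i
    · exact absurd (hzero 0 (by rw [weight_calc]; simp)) hi
    · exact absurd (hzero 1 (by rw [weight_calc]; simp)) hi
    · exact Or.inl rfl
    · exact Or.inr rfl

/-- classification of grading-preserving elementary automorphisms of
`k[y₁,y₂,y₃,y₄]` with `deg y₁ = deg y₂ = 1`, `deg y₃ = deg y₄ = -1`.  An elementary
map is given by a vector `v` of images of the variables which is either linear or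
adds to a single variable `y_{i₀}` a polynomial in the other variables.  If it
preserves the grading then either it is linear with `v 0, v 1` in the span of
`y₁,y₂` and `v 2, v 3` in the span of `y₃,y₄` (in particular, diagonal scalings and
degree-preserving linear maps within `{y₁,y₂}` and `{y₃,y₄}`), or it has one of the
four displayed forms `yᵢ ↦ yᵢ + yⱼ·H(··,··)`. -/
theorem grading_preserving_elementary_classification
    (k : Type*) [Field k] [CharZero k]
    (v : Fin 4 → MvPolynomial (Fin 4) k)
    (hgr : ∀ j : Fin 4, v j ∈ weightedHomogeneousSubmodule k
      (![1, 1, -1, -1] : Fin 4 → ℤ) ((![1, 1, -1, -1] : Fin 4 → ℤ) j))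
    (helem : (∀ j : Fin 4, v j ∈ Submodule.span k (Set.range (X : Fin 4 → MvPolynomial (Fin 4) k))) ∨
      ∃ (i₀ : Fin 4) (f : MvPolynomial (Fin 4) k),
        f ∈ MvPolynomial.supported k ({i₀}ᶜ : Set (Fin 4)) ∧
        v i₀ = X i₀ + f ∧ ∀ j ≠ i₀, v j = X j) :
    (v 0 ∈ Submodule.span k ({X 0, X 1} : Set (MvPolynomial (Fin 4) k)) ∧
     v 1 ∈ Submodule.span k ({X 0, X 1} : Set (MvPolynomial (Fin 4) k)) ∧
     v 2 ∈ Submodule.span k ({X 2, X 3} : Set (MvPolynomial (Fin 4) k)) ∧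
     v 3 ∈ Submodule.span k ({X 2, X 3} : Set (MvPolynomial (Fin 4) k))) ∨
    (∃ H : MvPolynomial (Fin 2) k,
      v = ![X 0 + X 1 * aeval ![X 1 * X 2, X 1 * X 3] H, X 1, X 2, X 3]) ∨
    (∃ H : MvPolynomial (Fin 2) k,
      v = ![X 0, X 1 + X 0 * aeval ![X 0 * X 2, X 0 * X 3] H, X 2, X 3]) ∨
    (∃ H : MvPolynomial (Fin 2) k,
      v = ![X 0, X 1, X 2 + X 3 * aeval ![X 0 * X 3, X 1 * X 3] H, X 3]) ∨
    (∃ H : MvPolynomial (Fin 2) k,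
      v = ![X 0, X 1, X 2, X 3 + X 2 * aeval ![X 0 * X 2, X 1 * X 2] H]) := by
  rcases helem with hlin | ⟨i₀, f, hsupp, hvi, hvj⟩
  · left
    exact ⟨(lin_case k _ (hlin 0) _ ((mem_weightedHomogeneousSubmodule _ _ _ _).mp (hgr 0))).1 rfl,
      (lin_case k _ (hlin 1) _ ((mem_weightedHomogeneousSubmodule _ _ _ _).mp (hgr 1))).1 rfl,
      (lin_case k _ (hlin 2) _ ((mem_weightedHomogeneousSubmodule _ _ _ _).mp (hgr 2))).2 rfl,
      (lin_case k _ (hlin 3) _ ((mem_weightedHomogeneousSubmodule _ _ _ _).mp (hgr 3))).2 rfl⟩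
  · right
    have hfm : f ∈ weightedHomogeneousSubmodule k (![1, 1, -1, -1] : Fin 4 → ℤ)
        ((![1, 1, -1, -1] : Fin 4 → ℤ) i₀) := by
      have h1 := hgr i₀
      rw [hvi] at h1
      have hx : X i₀ ∈ weightedHomogeneousSubmodule k (![1, 1, -1, -1] : Fin 4 → ℤ)
          ((![1, 1, -1, -1] : Fin 4 → ℤ) i₀) :=
        (mem_weightedHomogeneousSubmodule _ _ _ _).mpr (isWeightedHomogeneous_X _ _ _)
      have := Submodule.sub_mem _ h1 hx
      simpa using this
    have hf := (mem_weightedHomogeneousSubmodule _ _ _ _).mp hfm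
    have hsupport : ∀ d ∈ f.support, d i₀ = 0 := by
      intro d hd
      by_contra h
      have h1 : i₀ ∈ f.vars := (mem_vars _).mpr ⟨d, hd, Finsupp.mem_support_iff.mpr h⟩
      have h2 := mem_supported.mp hsupp h1
      simp at h2
    have hw : ∀ d ∈ f.support,
        (d 0 : ℤ) + d 1 - d 2 - d 3 = (![1, 1, -1, -1] : Fin 4 → ℤ) i₀ := by
      intro d hd
      rw [← weight_calc]
      exact hf (MvPolynomial.mem_support_iff.mp hd)
    fin_cases i₀
    · obtain ⟨H, hH⟩ := key_s17 k 0 1 2 3 (by decide) (by decide) (by decide) (by decide)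
        (by decide) (by decide) (by decide) f (fun d hd => by
          have h1 : d 0 = 0 := hsupport d hd
          have h2 : (d 0 : ℤ) + d 1 - d 2 - d 3 = 1 := hw d hd
          exact ⟨h1, by omega⟩)
      refine Or.inl ⟨H, ?_⟩
      funext j
      fin_cases j
      · simpa [hH] using hvi
      · simpa using hvj 1 (by decide)
      · simpa using hvj 2 (by decide)
      · simpa using hvj 3 (by decide)
    · obtain ⟨H, hH⟩ := key_s17 k 1 0 2 3 (by decide) (by decide) (by decide) (by decide)
        (by decide) (by decide) (by decide) f (fun d hd => by
          have h1 : d 1 = 0 := hsupport d hd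
          have h2 : (d 0 : ℤ) + d 1 - d 2 - d 3 = 1 := hw d hd
          exact ⟨h1, by omega⟩)
      refine Or.inr (Or.inl ⟨H, ?_⟩)
      funext j
      fin_cases j
      · simpa using hvj 0 (by decide)
      · simpa [hH] using hvi
      · simpa using hvj 2 (by decide)
      · simpa using hvj 3 (by decide)
    · obtain ⟨H, hH⟩ := key_s17 k 2 3 0 1 (by decide) (by decide) (by decide) (by decide)
        (by decide) (by decide) (by decide) f (fun d hd => by
          have h1 : d 2 = 0 := hsupport d hd
          have h2 : (d 0 : ℤ) + d 1 - d 2 - d 3 = -1 := hw d hd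
          exact ⟨h1, by omega⟩)
      refine Or.inr (Or.inr (Or.inl ⟨H, ?_⟩))
      have harg : (![X 0 * X 3, X 1 * X 3] : Fin 2 → MvPolynomial (Fin 4) k)
          = ![X 3 * X 0, X 3 * X 1] := by
        rw [mul_comm (X 0) (X 3), mul_comm (X 1) (X 3)]
      funext j
      fin_cases j
      · simpa using hvj 0 (by decide)
      · simpa using hvj 1 (by decide)
      · rw [harg]; simpa [hH] using hvi
      · simpa using hvj 3 (by decide)
    · obtain ⟨H, hH⟩ := key_s17 k 3 2 0 1 (by decide) (by decide) (by decide) (by decide)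
        (by decide) (by decide) (by decide) f (fun d hd => by
          have h1 : d 3 = 0 := hsupport d hd
          have h2 : (d 0 : ℤ) + d 1 - d 2 - d 3 = -1 := hw d hd
          exact ⟨h1, by omega⟩)
      refine Or.inr (Or.inr (Or.inr ⟨H, ?_⟩))
      have harg : (![X 0 * X 2, X 1 * X 2] : Fin 2 → MvPolynomial (Fin 4) k)
          = ![X 2 * X 0, X 2 * X 1] := by
        rw [mul_comm (X 0) (X 2), mul_comm (X 1) (X 2)]
      funext j
      fin_cases j
      · simpa using hvj 0 (by decide)
      · simpa using hvj 1 (by decide)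
      · simpa using hvj 2 (by decide)
      · rw [harg]; simpa [hH] using hvi
end
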